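/- Let A be an infinite cycle, let i ≠ j be nodes, and let n' > max(i,j). Then there exists n ≤ n' with ν_A(n) = {i,j} if and only if the segment of A_{n'} between i and j is nonempty and every node in it is larger than both i and j; and in that case the (unique) such n is the smallest node in the segment between i and j. -/

import Mathlib

open MeasureTheory

/-- An infinite cycle: coordinate `i` represents the choice `c_{i+3} ∈ {1,…,i+3}`
(encoded as `Fin (i+3)`, with value `v` representing `v+1`). -/
abbrev InfCycle := ∀ i : ℕ, Fin (i + 3)

/-- The list of nodes of the cycle `A_n`, in positive direction starting at node 1.
`A_{n+1}` arises from `A_n` by inserting node `n+1` into the `c_n`-th edge. -/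
def listOf (c : InfCycle) : ℕ → List ℕ
  | 0 => []
  | 1 => []
  | 2 => []
  | 3 => [1, 2, 3]
  | (n + 4) => (listOf c (n + 3)).insertIdx ((c n).val + 1) (n + 4)

/-- The node following `x` in the cyclic order given by the list `l`. -/
def cyclicNext (l : List ℕ) (x : ℕ) : ℕ := (l.rotate 1).getD (l.idxOf x) 0

/-- The node preceding `x` in the cyclic order given by the list `l`. -/
def cyclicPrev (l : List ℕ) (x : ℕ) : ℕ := (l.rotate (l.length - 1)).getD (l.idxOf x) 0

/-- `ν⁺_A(k)`: the neighbor of `k` in `A_k` in positive direction. -/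
def nuPlus (c : InfCycle) (k : ℕ) : ℕ :=
  if k ≤ 1 then 0 else if k = 2 then 1 else cyclicNext (listOf c k) k

/-- `ν⁻_A(k)`: the neighbor of `k` in `A_k` in negative direction. -/
def nuMinus (c : InfCycle) (k : ℕ) : ℕ :=
  if k ≤ 1 then 0 else if k = 2 then 1 else cyclicPrev (listOf c k) k

/-- `ν_A(k) = {ν⁺_A(k), ν⁻_A(k)}`, the edge of `A_{k-1}` into which `k` was inserted. -/
def nuSet (c : InfCycle) (k : ℕ) : Finset ℕ := {nuPlus c k, nuMinus c k}

/-- The edges (as unordered pairs) of the cycle whose nodes, in cyclic order, are `l`. -/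
def edgeList (l : List ℕ) : List (Finset ℕ) :=
  l.zipWith (fun x y => ({x, y} : Finset ℕ)) (l.rotate 1)

/-- `E(A_n)`: the edge set of the cycle `A_n`. -/
def cycleEdges (c : InfCycle) (n : ℕ) : Finset (Finset ℕ) := (edgeList (listOf c n)).toFinset

/-- `k` is a vertex of the pedigree graph `G_n^{AB}`. -/
def isVertex (a b : InfCycle) (n k : ℕ) : Prop := 4 ≤ k ∧ k ≤ n ∧ nuSet a k ≠ nuSet b k

/-- The condition for an edge of the pedigree graph between vertices `k < m`
(type-1 A→B, type-1 B→A, type-2 A→B, type-2 B→A). -/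
def edgeCond (a b : InfCycle) (k m : ℕ) : Prop :=
  nuSet a m = nuSet b k ∨ nuSet b m = nuSet a k ∨
  (k = max (nuPlus a m) (nuMinus a m) ∧ nuSet b k ∩ nuSet a m = ∅) ∨
  (k = max (nuPlus b m) (nuMinus b m) ∧ nuSet a k ∩ nuSet b m = ∅)

/-- The pedigree graph `G_n^{AB}`, as a graph on `ℕ` (non-vertices are isolated). -/
def pedigreeGraph (a b : InfCycle) (n : ℕ) : SimpleGraph ℕ where
  Adj k m := isVertex a b n k ∧ isVertex a b n m ∧
    ((k < m ∧ edgeCond a b k m) ∨ (m < k ∧ edgeCond a b m k))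
  symm := ⟨fun k m ⟨h1, h2, h3⟩ => ⟨h2, h1, h3.symm⟩⟩
  loopless := ⟨fun k h => by rcases h.2.2 with ⟨h', _⟩ | ⟨h', _⟩ <;> exact absurd h' (lt_irrefl k)⟩

/-- The vertex set of the pedigree graph `G_n^{AB}`. -/
def vertexSet (a b : InfCycle) (n : ℕ) : Set ℕ := {k | isVertex a b n k}

/-- The pedigree graph `G_n^{AB}` on its vertex set. -/
def pGraph (a b : InfCycle) (n : ℕ) : SimpleGraph (vertexSet a b n) :=
  (pedigreeGraph a b n).induce (vertexSet a b n)

/-- The pedigree graph `G_n^{AB}` is connected. -/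
def pConnected (a b : InfCycle) (n : ℕ) : Prop := (pGraph a b n).Connected

/-- `T_n`: the number of connected components of the pedigree graph `G_n^{AB}`. -/
noncomputable def Tnum (a b : InfCycle) (n : ℕ) : ℕ :=
  Nat.card (pGraph a b n).ConnectedComponent

/-- `I_n`: at time `n`, the node `n` is added to the pedigree graph as an isolated vertex. -/
def isolatedAt (a b : InfCycle) (n : ℕ) : Prop :=
  isVertex a b n n ∧ ∀ k, ¬ (pedigreeGraph a b n).Adj n k

/-- The event that the first `m` coordinates (`c_3, …, c_{m+2}`) agree with those of `b₀`. -/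
def prefixEvent (b₀ : InfCycle) (m : ℕ) : Set InfCycle := {b | ∀ j, j < m → b j = b₀ j}

/-- `μ` is the distribution of a random infinite cycle: the product over `n ≥ 3` of the
uniform measures on `{1,…,n}`.  (This property determines `μ` uniquely.) -/
def IsCycleMeasure (μ : Measure InfCycle) : Prop :=
  IsProbabilityMeasure μ ∧
    ∀ (b₀ : InfCycle) (m : ℕ),
      μ (prefixEvent b₀ m) = ∏ j ∈ Finset.range m, ((j + 3 : ℕ) : ENNReal)⁻¹

/-- An Alice strategy: her choice at each time depends only on Bob's earlier choices. -/
structure AliceStrategy where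
  play : InfCycle → InfCycle
  adapted : ∀ (b b' : InfCycle) (i : ℕ), (∀ j, j < i → b j = b' j) → play b i = play b' i

/-- `S_n = |E(A_n) ∩ E(B_n)|`. -/
def Sval (a b : InfCycle) (n : ℕ) : ℕ := (cycleEdges a n ∩ cycleEdges b n).card

/-- `S*_n`: the number of common edges not incident on `ν_A(n+1)`. -/
def Sstar (a b : InfCycle) (n : ℕ) : ℕ :=
  ((cycleEdges a n ∩ cycleEdges b n).filter (fun e => e ∩ nuSet a (n + 1) = ∅)).card

/-- `R_n`: the number of edges of `B_n` that are not common and not incident on `ν_A(n+1)`. -/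
def Rval (a b : InfCycle) (n : ℕ) : ℕ :=
  ((cycleEdges b n \ cycleEdges a n).filter (fun e => e ∩ nuSet a (n + 1) = ∅)).card

/-- Alice's move at time `m` is a d-move: `ν_A(m) ∉ E^∩_{m-1}`. -/
def dMoveAt (a b : InfCycle) (m : ℕ) : Prop := nuSet a m ∉ cycleEdges b (m - 1)

/-- `Y`: the total number of times an isolated vertex is created in the pedigree graph. -/
noncomputable def Yval (a b : InfCycle) : ENNReal :=
  ∑' m : ℕ, Set.indicator {x : ℕ | isolatedAt a b x} (fun _ => 1) m

/-- The open arc of the cycle (given as a list `l` in positive cyclic order) from `i` to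
`j` in positive direction, excluding both endpoints. -/
def arcList (l : List ℕ) (i j : ℕ) : List ℕ :=
  ((l.rotate (l.idxOf i)).tail).takeWhile (· ≠ j)

/-- `min({1,2,3} \ {i,j})`. -/
def segPivot (i j : ℕ) : ℕ :=
  if 1 ≠ i ∧ 1 ≠ j then 1 else if 2 ≠ i ∧ 2 ≠ j then 2 else 3

/-- The cycSegment between `i` and `j`: the open arc between them which does not contain
`min({1,2,3} \ {i,j})`. -/
def cycSegment (l : List ℕ) (i j : ℕ) : List ℕ :=
  if segPivot i j ∈ arcList l i j then arcList l j i else arcList l i j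


/-!
Follow the segment `S` of `A_n` between `i` and `j` as `n` grows from `max 3 (max i j)`.
Cut the cycle open at the edge that receives node `n + 1`. If the cut lies in the other arc,
`S` is unchanged and the edge is not `{i, j}`, since that arc contains the pivot and is
nonempty. If it lies in `S`, node `n + 1` joins `S`, and the edge is `{i, j}` exactly when `S`
was empty. Hence the invariant: the times `m ≤ n` with `ν(m) = {i, j}` are exactly the least
node of `S`, provided that node exceeds `i` and `j`. It holds at the start, where every node
of `S` is at most `max 3 (max i j)`, and is preserved because each new node exceeds all
earlier ones.
-/

namespace List

variable {α : Type*}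

theorem IsRotated.exists_append {l l' : List α} (h : l ~r l') :
    ∃ l₁ l₂, l = l₁ ++ l₂ ∧ l' = l₂ ++ l₁ := by
  obtain ⟨k, hk, rfl⟩ := isRotated_iff_mod.mp h
  exact ⟨l.take k, l.drop k, (take_append_drop k l).symm, rotate_eq_drop_append_take hk⟩

theorem isRotated_cons_append_cons (x y : α) (S T : List α) :
    x :: (S ++ y :: T) ~r y :: (T ++ x :: S) := by
  simpa using isRotated_append (l := x :: S) (l' := y :: T)

theorem exists_isRotated_cons_append_cons {l : List α} {i j : α} (hi : i ∈ l) (hj : j ∈ l)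
    (hij : i ≠ j) : ∃ A B, l ~r i :: (A ++ j :: B) := by
  obtain ⟨L₁, L₂, rfl⟩ := append_of_mem hi
  have hj' : j ∈ L₂ ++ L₁ := by
    simp only [mem_append, mem_cons] at hj ⊢
    grind
  obtain ⟨A, B, hAB⟩ := append_of_mem hj'
  exact ⟨A, B, by simpa [← hAB] using isRotated_append (l := L₁) (l' := i :: L₂)⟩

theorem IsRotated.split_cons_append_cons {R S T : List α} {x y : α}
    (h : R ~r x :: (S ++ y :: T)) :
    (∃ S₁ S₂, S = S₁ ++ S₂ ∧ R = S₂ ++ y :: (T ++ x :: S₁)) ∨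
      ∃ T₁ T₂, T = T₁ ++ T₂ ∧ R = T₂ ++ x :: (S ++ y :: T₁) := by
  obtain ⟨C₁, C₂, hC, rfl⟩ := h.symm.exists_append
  rw [show x :: (S ++ y :: T) = (x :: S) ++ (y :: T) by simp, append_eq_append_iff] at hC
  rcases hC with ⟨D, rfl, hyT⟩ | ⟨D, hxS, rfl⟩
  · rcases D with _ | ⟨d, T₁⟩
    · simp only [nil_append] at hyT
      exact Or.inl ⟨S, [], by simp, by simp [← hyT]⟩
    · simp only [cons_append, cons.injEq] at hyT
      obtain ⟨rfl, rfl⟩ := hyT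
      exact Or.inr ⟨T₁, C₂, rfl, by simp⟩
  · rcases C₁ with _ | ⟨c, S₁⟩
    · rw [nil_append] at hxS
      exact Or.inr ⟨T, [], by simp, by simp [← hxS]⟩
    · simp only [cons_append, cons.injEq] at hxS
      obtain ⟨rfl, rfl⟩ := hxS
      exact Or.inl ⟨S₁, D, rfl, by simp⟩

theorem Nodup.rotate_idxOf_eq [DecidableEq α] {l t : List α} {x : α} (hl : l.Nodup)
    (h : l ~r x :: t) : l.rotate (l.idxOf x) = x :: t := by
  obtain ⟨l₁, l₂, rfl, hl₂⟩ := h.exists_append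
  rcases l₂ with _ | ⟨z, l₂⟩
  · subst hl₂
    simp
  · simp only [cons_append, cons.injEq] at hl₂
    obtain ⟨rfl, rfl⟩ := hl₂
    have hx : x ∉ l₁ := fun hx => (nodup_append.mp hl).2.2 x hx x mem_cons_self rfl
    rw [idxOf_append_of_notMem hx, idxOf_cons_self, Nat.add_zero, rotate_append_length_eq,
      cons_append]

end List

theorem Finset.pair_eq_pair_iff {α : Type*} [DecidableEq α] {x y z w : α} :
    ({x, y} : Finset α) = {z, w} ↔ x = z ∧ y = w ∨ x = w ∧ y = z := by
  rw [← Finset.coe_inj, Finset.coe_pair, Finset.coe_pair, Set.pair_eq_pair_iff]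

theorem cyclicNext_eq_next {l : List ℕ} {x : ℕ} (hx : x ∈ l) : cyclicNext l x = l.next x hx := by
  have hlt : l.idxOf x < l.length := List.idxOf_lt_length_of_mem hx
  rw [cyclicNext, List.next_eq_getElem, List.getD_eq_getElem _ _ (by simpa using hlt),
    List.getElem_rotate]

theorem cyclicPrev_eq_prev {l : List ℕ} {x : ℕ} (hx : x ∈ l) : cyclicPrev l x = l.prev x hx := by
  have hlt : l.idxOf x < l.length := List.idxOf_lt_length_of_mem hx
  rw [cyclicPrev, List.prev_eq_getElem, List.getD_eq_getElem _ _ (by simpa using hlt),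
    List.getElem_rotate]

section ListOf

variable (a : InfCycle)

theorem length_listOf {n : ℕ} (hn : 3 ≤ n) : (listOf a n).length = n := by
  induction n, hn using Nat.le_induction with
  | base => rfl
  | succ n hn ih =>
    obtain ⟨k, rfl⟩ : ∃ k, n = k + 3 := ⟨n - 3, by omega⟩
    rw [listOf, List.length_insertIdx_of_le_length (by have := (a k).isLt; omega), ih]

theorem listOf_succ_eq {n : ℕ} (hn : 3 ≤ n) :
    ∃ l₁ l₂, listOf a n = l₁ ++ l₂ ∧ listOf a (n + 1) = l₁ ++ (n + 1) :: l₂ := by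
  obtain ⟨k, rfl⟩ : ∃ k, n = k + 3 := ⟨n - 3, by omega⟩
  have hk : (a k).val + 1 ≤ (listOf a (k + 3)).length := by
    rw [length_listOf a hn]; have := (a k).isLt; omega
  obtain ⟨l₁, l₂, h, -, h'⟩ := List.exists_of_modifyTailIdx (List.cons (k + 4)) hk
  exact ⟨l₁, l₂, h, h'⟩

theorem mem_listOf {n : ℕ} (hn : 3 ≤ n) {x : ℕ} : x ∈ listOf a n ↔ 1 ≤ x ∧ x ≤ n := by
  induction n, hn using Nat.le_induction with
  | base => simp [listOf]; omega
  | succ n hn ih =>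
    obtain ⟨l₁, l₂, h, h'⟩ := listOf_succ_eq a hn
    rw [h] at ih
    simp only [h', List.mem_append, List.mem_cons] at ih ⊢
    grind

theorem nodup_listOf {n : ℕ} (hn : 3 ≤ n) : (listOf a n).Nodup := by
  induction n, hn using Nat.le_induction with
  | base => exact List.nodup_cons.mpr ⟨by simp, by simp⟩
  | succ n hn ih =>
    obtain ⟨l₁, l₂, h, h'⟩ := listOf_succ_eq a hn
    rw [h', List.nodup_middle, List.nodup_cons, ← h, mem_listOf a hn]
    exact ⟨by omega, ih⟩

theorem exists_nuSet_succ {n : ℕ} (hn : 3 ≤ n) :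
    ∃ R, ∃ hR : R ≠ [], R ~r listOf a n ∧ listOf a (n + 1) ~r (n + 1) :: R ∧
      nuSet a (n + 1) = {R.head hR, R.getLast hR} := by
  obtain ⟨l₁, l₂, h, h'⟩ := listOf_succ_eq a hn
  have hR : l₂ ++ l₁ ≠ [] := by
    have h1 : 1 ∈ listOf a n := (mem_listOf a hn).mpr ⟨le_rfl, by omega⟩
    rw [h, List.mem_append, or_comm, ← List.mem_append] at h1
    exact List.ne_nil_of_mem h1
  have hrot : listOf a (n + 1) ~r (n + 1) :: (l₂ ++ l₁) := by
    rw [h']; simpa using List.isRotated_append (l := l₁) (l' := (n + 1) :: l₂)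
  have hnd := nodup_listOf a (show 3 ≤ n + 1 by omega)
  have hmem : n + 1 ∈ listOf a (n + 1) := by simp [h']
  refine ⟨l₂ ++ l₁, hR, h ▸ List.isRotated_append, hrot, ?_⟩
  obtain ⟨r, R, hr⟩ := List.exists_cons_of_ne_nil hR
  rw [nuSet, nuPlus, nuMinus, if_neg (by omega), if_neg (by omega), if_neg (by omega),
    if_neg (by omega), cyclicNext_eq_next hmem, cyclicPrev_eq_prev hmem,
    List.isRotated_next_eq hrot hnd, List.isRotated_prev_eq hrot hnd]
  simp [hr]

theorem lt_of_mem_nuSet {m x : ℕ} (hm : 4 ≤ m) (hx : x ∈ nuSet a m) : x < m := by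
  obtain ⟨n, rfl⟩ : ∃ n, m = n + 1 := ⟨m - 1, by omega⟩
  obtain ⟨R, hR, hRl, -, hν⟩ := exists_nuSet_succ a (show 3 ≤ n by omega)
  have hxR : x ∈ R := by
    rw [hν, Finset.mem_insert, Finset.mem_singleton] at hx
    rcases hx with rfl | rfl
    exacts [List.head_mem hR, List.getLast_mem hR]
  have := (mem_listOf a (show 3 ≤ n by omega)).mp (hRl.mem_iff.mp hxR)
  omega

end ListOf

/-- `R` is the cycle `x :: (S₁ ++ S₂ ++ y :: T)` cut open between `S₁` and `S₂`, so that
`{R.head, R.getLast}` is the edge at the cut. -/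
theorem pair_head_getLast_eq_iff {x y : ℕ} {S₁ S₂ T R : List ℕ}
    (hnd : (x :: (S₁ ++ S₂ ++ y :: T)).Nodup) (hR : R = S₂ ++ y :: (T ++ x :: S₁))
    (hne : R ≠ []) :
    ({R.head hne, R.getLast hne} : Finset ℕ) = {x, y} ↔ S₁ ++ S₂ = [] := by
  subst hR
  rcases S₂ with _ | ⟨s, S₂⟩ <;> rcases S₁.eq_nil_or_concat' with rfl | ⟨S₁, t, rfl⟩ <;>
    simp_all [List.nodup_append, Finset.pair_eq_pair_iff, Finset.pair_comm]
  grind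

theorem segPivot_spec (i j : ℕ) :
    1 ≤ segPivot i j ∧ segPivot i j ≤ 3 ∧ segPivot i j ≠ i ∧ segPivot i j ≠ j := by
  unfold segPivot
  split_ifs <;> omega

theorem arcList_eq {l S T : List ℕ} {x y : ℕ} (hl : l.Nodup) (h : l ~r x :: (S ++ y :: T)) :
    arcList l x y = S := by
  have hyS : y ∉ S := fun hy =>
    (List.nodup_append.mp (h.nodup_iff.mp hl).of_cons).2.2 y hy y List.mem_cons_self rfl
  rw [arcList, hl.rotate_idxOf_eq h, List.tail_cons,
    List.takeWhile_append_of_pos (fun z hz => by simpa using ne_of_mem_of_not_mem hz hyS),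
    List.takeWhile_cons_of_neg (by simp), List.append_nil]

theorem cycSegment_eq {l S T : List ℕ} {i j x y : ℕ} (hl : l.Nodup)
    (h : l ~r x :: (S ++ y :: T)) (hpT : segPivot i j ∈ T)
    (hxy : x = i ∧ y = j ∨ x = j ∧ y = i) : cycSegment l i j = S := by
  have hpS : segPivot i j ∉ S := fun hpS =>
    (List.nodup_append.mp (h.nodup_iff.mp hl).of_cons).2.2 _ hpS _ (.tail y hpT) rfl
  have hxy' := arcList_eq hl h
  have hyx := arcList_eq hl (h.trans (List.isRotated_cons_append_cons x y S T))
  rcases hxy with ⟨rfl, rfl⟩ | ⟨rfl, rfl⟩ <;> simp [cycSegment, *]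

theorem exists_isRotated_segPivot_mem {a : InfCycle} {i j n : ℕ} (hn : 3 ≤ n) (hi : 1 ≤ i)
    (hj : 1 ≤ j) (hij : i ≠ j) (hin : i ≤ n) (hjn : j ≤ n) :
    ∃ x y S T, (x = i ∧ y = j ∨ x = j ∧ y = i) ∧ listOf a n ~r x :: (S ++ y :: T) ∧
      segPivot i j ∈ T := by
  obtain ⟨hp₁, hp₃, hpi, hpj⟩ := segPivot_spec i j
  have hmem (z : ℕ) (h₁ : 1 ≤ z) (hz : z ≤ n) : z ∈ listOf a n := (mem_listOf a hn).mpr ⟨h₁, hz⟩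
  obtain ⟨A, B, h⟩ := List.exists_isRotated_cons_append_cons (hmem i hi hin) (hmem j hj hjn) hij
  have hp : segPivot i j ∈ A ∨ segPivot i j ∈ B := by
    simpa [hpi, hpj] using h.mem_iff.mp (hmem _ hp₁ (by omega))
  rcases hp with hp | hp
  · exact ⟨j, i, B, A, Or.inr ⟨rfl, rfl⟩, h.trans (List.isRotated_cons_append_cons i j A B), hp⟩
  · exact ⟨i, j, A, B, Or.inl ⟨rfl, rfl⟩, h, hp⟩

theorem isLeast_insert_iff_of_forall_lt {α : Type*} [LinearOrder α] {s : Set α} {b m : α}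
    (hs : s.Nonempty) (hb : ∀ x ∈ s, x < b) : IsLeast (insert b s) m ↔ IsLeast s m := by
  obtain ⟨x, hx⟩ := hs
  simp only [IsLeast, Set.mem_insert_iff, lowerBounds_insert, Set.mem_inter_iff, Set.mem_Iic]
  constructor
  · rintro ⟨rfl | hm, -, hlow⟩
    · exact absurd (hlow hx) (not_le.mpr (hb x hx))
    · exact ⟨hm, hlow⟩
  · rintro ⟨hm, hlow⟩
    exact ⟨Or.inr hm, (hb m hm).le, hlow⟩

def SegmentInvariant (a : InfCycle) (i j n : ℕ) (s : Set ℕ) : Prop :=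
  ∀ m, (4 ≤ m ∧ m ≤ n ∧ nuSet a m = {i, j}) ↔ (IsLeast s m ∧ i < m ∧ j < m)

namespace SegmentInvariant

variable {a : InfCycle} {i j n : ℕ} {s : Set ℕ}

theorem succ_of_ne (h : SegmentInvariant a i j n s) (hν : nuSet a (n + 1) ≠ {i, j}) :
    SegmentInvariant a i j (n + 1) s := by
  intro m
  rw [← h m]
  refine and_congr_right fun _ => ⟨fun ⟨hle, hm⟩ => ⟨?_, hm⟩, fun ⟨hle, hm⟩ => ⟨by omega, hm⟩⟩
  rcases hle.lt_or_eq with hlt | rfl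
  · omega
  · exact absurd hm hν

theorem succ_insert (h : SegmentInvariant a i j n s) (hn : 3 ≤ n) (hs : ∀ x ∈ s, x ≤ n)
    (hin : i ≤ n) (hjn : j ≤ n) (hν : nuSet a (n + 1) = {i, j} ↔ s = ∅) :
    SegmentInvariant a i j (n + 1) (insert (n + 1) s) := by
  rcases s.eq_empty_or_nonempty with rfl | hne
  · intro m
    have hold : ¬ (4 ≤ m ∧ m ≤ n ∧ nuSet a m = {i, j}) := fun hm => by
      simpa using ((h m).mp hm).1.1
    constructor
    · rintro ⟨h4, hle, hm⟩
      obtain rfl : m = n + 1 := by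
        by_contra hne; exact hold ⟨h4, by omega, hm⟩
      exact ⟨by simp, by omega, by omega⟩
    · rintro ⟨⟨hm, -⟩, -⟩
      obtain rfl : m = n + 1 := by simpa using hm
      exact ⟨by omega, le_rfl, hν.mpr rfl⟩
  · have hν' : nuSet a (n + 1) ≠ {i, j} := fun h' => hne.ne_empty (hν.mp h')
    intro m
    rw [(h.succ_of_ne hν') m, isLeast_insert_iff_of_forall_lt hne fun x hx => by
      have := hs x hx; omega]

theorem characterization {S : List ℕ} (h : SegmentInvariant a i j n {x | x ∈ S}) :
    ((∃ m, 4 ≤ m ∧ m ≤ n ∧ nuSet a m = {i, j}) ↔ (S ≠ [] ∧ ∀ x ∈ S, i < x ∧ j < x)) ∧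
      ∀ m, 4 ≤ m → m ≤ n → nuSet a m = {i, j} → m ∈ S ∧ ∀ x ∈ S, m ≤ x := by
  refine ⟨⟨?_, ?_⟩, fun m h4 hle hm => ((h m).mp ⟨h4, hle, hm⟩).1⟩
  · rintro ⟨m, hm⟩
    obtain ⟨⟨hmS, hlow⟩, him, hjm⟩ := (h m).mp hm
    exact ⟨List.ne_nil_of_mem hmS, fun x hx => ⟨him.trans_le (hlow hx), hjm.trans_le (hlow hx)⟩⟩
  · rintro ⟨hne, hgt⟩
    have hleast : IsLeast {x | x ∈ S} (sInf {x | x ∈ S}) :=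
      ⟨Nat.sInf_mem (List.exists_mem_of_ne_nil S hne), fun x hx => Nat.sInf_le hx⟩
    exact ⟨_, (h _).mpr ⟨hleast, hgt _ hleast.1⟩⟩

end SegmentInvariant

section Induction

variable {a : InfCycle} {i j : ℕ}

theorem segmentInvariant_start (hi : 1 ≤ i) (hj : 1 ≤ j) (hij : i ≠ j) :
    SegmentInvariant a i j (max 3 (max i j))
      {x | x ∈ cycSegment (listOf a (max 3 (max i j))) i j} := by
  set n := max 3 (max i j)
  obtain ⟨x, y, S, T, hxy, h, hpT⟩ :=
    exists_isRotated_segPivot_mem (a := a) (n := n) (by omega) hi hj hij (by omega) (by omega)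
  have hnd := nodup_listOf a (show 3 ≤ n by omega)
  rw [cycSegment_eq hnd h hpT hxy]
  obtain ⟨hp₁, hp₃, hpi, hpj⟩ := segPivot_spec i j
  intro m
  refine iff_of_false (fun ⟨h4, hle, hm⟩ => ?_) (fun ⟨⟨hmS, _⟩, him, hjm⟩ => ?_)
  · have := lt_of_mem_nuSet a h4 (x := i) (by simp [hm])
    have := lt_of_mem_nuSet a h4 (x := j) (by simp [hm])
    omega
  · have hnd' := h.nodup_iff.mp hnd
    have hmp : m ≠ segPivot i j := fun hmp =>
      (List.nodup_append.mp hnd'.of_cons).2.2 m hmS m (hmp ▸ List.mem_cons_of_mem y hpT) rfl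
    have := (mem_listOf a (show 3 ≤ n by omega)).mp
      (h.mem_iff.mpr (List.mem_cons_of_mem x (List.mem_append_left _ hmS)))
    omega

theorem SegmentInvariant.succ_cycSegment {n : ℕ} (hn : 3 ≤ n) (hi : 1 ≤ i) (hj : 1 ≤ j)
    (hij : i ≠ j) (hin : i ≤ n) (hjn : j ≤ n)
    (h : SegmentInvariant a i j n {x | x ∈ cycSegment (listOf a n) i j}) :
    SegmentInvariant a i j (n + 1) {x | x ∈ cycSegment (listOf a (n + 1)) i j} := by
  obtain ⟨x, y, S, T, hxy, hrot, hpT⟩ := exists_isRotated_segPivot_mem hn hi hj hij hin hjn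
  have hnd := nodup_listOf a hn
  have hnd' := nodup_listOf a (show 3 ≤ n + 1 by omega)
  rw [cycSegment_eq hnd hrot hpT hxy] at h
  have hpair : ({x, y} : Finset ℕ) = {i, j} := by
    rcases hxy with ⟨rfl, rfl⟩ | ⟨rfl, rfl⟩
    exacts [rfl, Finset.pair_comm _ _]
  obtain ⟨R, hR, hRl, hl', hν⟩ := exists_nuSet_succ a hn
  rcases (hRl.trans hrot).split_cons_append_cons with ⟨S₁, S₂, rfl, hRS⟩ | ⟨T₁, T₂, rfl, hRT⟩
  · have hrot' : listOf a (n + 1) ~r x :: ((S₁ ++ (n + 1) :: S₂) ++ y :: T) := hl'.trans <| by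
      simpa [hRS] using List.isRotated_append (l := (n + 1) :: (S₂ ++ y :: T)) (l' := x :: S₁)
    rw [cycSegment_eq hnd' hrot' hpT hxy]
    have hS : ∀ z ∈ S₁ ++ S₂, z ≤ n := fun z hz =>
      ((mem_listOf a hn).mp <| hrot.mem_iff.mpr <| .tail x <| List.mem_append_left _ hz).2
    convert h.succ_insert hn hS hin hjn ?_ using 2
    · ext z; simp; tauto
    · rw [hν, ← hpair, pair_head_getLast_eq_iff (hrot.nodup_iff.mp hnd) hRS hR]
      simp [Set.eq_empty_iff_forall_notMem, List.eq_nil_iff_forall_not_mem]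
  · have hrot' : listOf a (n + 1) ~r x :: (S ++ y :: (T₁ ++ (n + 1) :: T₂)) := hl'.trans <| by
      simpa [hRT] using List.isRotated_append (l := (n + 1) :: T₂) (l' := x :: (S ++ y :: T₁))
    have hpT' : segPivot i j ∈ T₁ ++ (n + 1) :: T₂ :=
      (List.mem_append.mp hpT).elim (List.mem_append_left _) (List.mem_append_right _ ∘ .tail _)
    rw [cycSegment_eq hnd' hrot' hpT' hxy]
    refine h.succ_of_ne fun hν' => ?_
    have hswap := hrot.trans (List.isRotated_cons_append_cons x y S (T₁ ++ T₂))
    rw [hν, ← hpair, Finset.pair_comm x,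
      pair_head_getLast_eq_iff (hswap.nodup_iff.mp hnd) hRT hR] at hν'
    simp [hν'] at hpT

theorem segmentInvariant_cycSegment (hi : 1 ≤ i) (hj : 1 ≤ j) (hij : i ≠ j) {n : ℕ}
    (hn : max 3 (max i j) ≤ n) :
    SegmentInvariant a i j n {x | x ∈ cycSegment (listOf a n) i j} := by
  induction n, hn using Nat.le_induction with
  | base => exact segmentInvariant_start hi hj hij
  | succ n hn ih => exact ih.succ_cycSegment (by omega) hi hj hij (by omega) (by omega)

end Induction

theorem nu_pair_characterization_general (a : InfCycle) (i j n' : ℕ)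
    (hi : 1 ≤ i) (hj : 1 ≤ j) (hij : i ≠ j) (hin : i < n') (hjn : j < n') :
    ((∃ n : ℕ, 4 ≤ n ∧ n ≤ n' ∧ nuSet a n = {i, j}) ↔
      (cycSegment (listOf a n') i j ≠ [] ∧
        ∀ x ∈ cycSegment (listOf a n') i j, i < x ∧ j < x)) ∧
    (∀ n : ℕ, 4 ≤ n → n ≤ n' → nuSet a n = {i, j} →
      n ∈ cycSegment (listOf a n') i j ∧ ∀ x ∈ cycSegment (listOf a n') i j, n ≤ x) :=
  (segmentInvariant_cycSegment hi hj hij (by omega)).characterization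

/-- There exists `n ≤ n'` with `ν_A(n) = {i,j}` iff the cycSegment of
`A_{n'}` between `i` and `j` is nonempty and all of its nodes are larger than both `i`
and `j`; in that case the unique such `n` is the smallest node of that cycSegment. -/
theorem nu_pair_characterization (a : InfCycle) (i j n' : ℕ)
    (hi : 1 ≤ i) (hj : 1 ≤ j) (hij : i ≠ j) (hn' : 3 ≤ n') (hin : i < n') (hjn : j < n') :
    ((∃ n : ℕ, 4 ≤ n ∧ n ≤ n' ∧ nuSet a n = {i, j}) ↔
      (cycSegment (listOf a n') i j ≠ [] ∧
        ∀ x ∈ cycSegment (listOf a n') i j, i < x ∧ j < x)) ∧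
    (∀ n : ℕ, 4 ≤ n → n ≤ n' → nuSet a n = {i, j} →
      n ∈ cycSegment (listOf a n') i j ∧ ∀ x ∈ cycSegment (listOf a n') i j, n ≤ x) :=
  nu_pair_characterization_general a i j n' hi hj hij hin hjn
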